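/- (Generalization bound for MSDA-WJDOT, Lemma 2.) Let (Z, d) be a measurable space equipped with a measurable pseudometric d, let k > 0, λ > 0, M ≥ 0, φ ∈ [0,1], and let L : ℝ × ℝ → [0,∞) be measurable, symmetric, k-Lipschitz in each argument, and satisfying the triangle inequality. Let p_{S,1}, …, p_{S,J} and p_T be probability measures on Z × ℝ, α in the simplex, p_S^α = Σ_j α_j p_{S,j}, f : Z → ℝ measurable, and p_T^f the self-labelled distribution of f with respect to p_T. Let D be the ground cost D((x,y),(x',y')) = kλ·d(x,x') + L(y,y') on Z × ℝ. Suppose f* : Z → ℝ minimizes h ↦ ε_{p_S^α}(h) + ε_{p_T}(h) over a class H of measurable functions containing f*, that |f*(x) − f*(x')| ≤ M for all x, x', that all expected losses involved are finite, and that there exists a coupling π* of p_S^α and p_T^f attaining W_D(p_S^α, p_T^f) with π*{((x_α, y_α), (x_T, y_T)) : |f*(x_α) − f*(x_T)| > λ·d(x_α, x_T)} ≤ φ. Then ε_{p_T}(f) ≤ W_D(p_S^α, p_T^f) + Λ(p_S^α, p_T) + k·M·φ, where Λ(p_S^α, p_T) = ε_{p_S^α}(f*) + ε_{p_T}(f*).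 -/

import Mathlib

open MeasureTheory ENNReal

/-- Expected loss of a predictor `h` with respect to a loss `L` and a joint
distribution `p` on `Z × ℝ` (taken in `[0,∞]`). -/
noncomputable def expLoss {Z : Type*} [MeasurableSpace Z]
    (L : ℝ → ℝ → ℝ) (p : Measure (Z × ℝ)) (h : Z → ℝ) : ℝ≥0∞ :=
  ∫⁻ z, ENNReal.ofReal (L z.2 (h z.1)) ∂p

/-- Self-labelled distribution: the pushforward of the first marginal of `p`
under `x ↦ (x, f x)`. -/
noncomputable def selfLabel {Z : Type*} [MeasurableSpace Z]
    (p : Measure (Z × ℝ)) (f : Z → ℝ) : Measure (Z × ℝ) :=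
  (p.map Prod.fst).map fun x => (x, f x)

/-- `π` is a coupling of `p` and `q`: a probability measure on the product
whose first marginal is `p` and whose second marginal is `q`. -/
def IsCoupling {V : Type*} [MeasurableSpace V]
    (π : Measure (V × V)) (p q : Measure V) : Prop :=
  IsProbabilityMeasure π ∧ π.map Prod.fst = p ∧ π.map Prod.snd = q

/-- Optimal transport cost for a nonnegative cost `c`: infimum over all
couplings of the integral of the cost (taken in `[0,∞]`). -/
noncomputable def otCost {V : Type*} [MeasurableSpace V]
    (c : V → V → ℝ) (p q : Measure V) : ℝ≥0∞ :=
  ⨅ (π : Measure (V × V)) (_ : IsCoupling π p q),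
    ∫⁻ w, ENNReal.ofReal (c w.1 w.2) ∂π

/-!
By the triangle inequality for `L`,
`ε_T(f) ≤ ε_T(f*) + ε_{p_T^f}(f*)`. Integrate the second term against the coupling `π*`:
for `((x₁, y₁), (x₂, y₂))`, symmetry, the triangle inequality and the Lipschitz property give
`L(y₂, f* x₂) ≤ L(y₁, y₂) + L(y₁, f* x₁) + k |f* x₁ - f* x₂|`,
and `k |f* x₁ - f* x₂|` is at most `k λ d(x₁, x₂)` off the bad set
`{λ d(x₁, x₂) < |f* x₁ - f* x₂|}` and at most `k M` on it. Integrating, the first and third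
terms make up the transport cost of `π*`, the second is `ε_{p_S^α}(f*)`, and the bad set
contributes `k M π*(bad) ≤ k M φ`.
-/

lemma nonneg_of_triangle {Z : Type*} {d : Z → Z → ℝ} (hrefl : ∀ x, d x x = 0)
    (hsymm : ∀ x x', d x x' = d x' x) (htri : ∀ x y z, d x z ≤ d x y + d y z) (x x' : Z) :
    0 ≤ d x x' := by
  linarith [htri x x' x, hrefl x, hsymm x x']

lemma loss_le_add_add_lipschitz {L : ℝ → ℝ → ℝ} {k : ℝ} (hLsymm : ∀ a b, L a b = L b a)
    (hLtri : ∀ a b c, L a c ≤ L a b + L b c) (hLlip : ∀ y a b, |L y a - L y b| ≤ k * |a - b|)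
    (a b c c' : ℝ) : L b c' ≤ L a b + L a c + k * |c - c'| := by
  have hlip := (le_abs_self _).trans (hLlip b c' c)
  rw [abs_sub_comm c'] at hlip
  linarith [hLtri b a c, hLsymm b a]

namespace IsCoupling

variable {V : Type*} [MeasurableSpace V] {π : Measure (V × V)} {p q : Measure V}

lemma lintegral_comp_fst (hπ : IsCoupling π p q) {g : V → ℝ≥0∞} (hg : Measurable g) :
    ∫⁻ w, g w.1 ∂π = ∫⁻ v, g v ∂p := by
  rw [← hπ.2.1, lintegral_map hg measurable_fst]

lemma lintegral_comp_snd (hπ : IsCoupling π p q) {g : V → ℝ≥0∞} (hg : Measurable g) :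
    ∫⁻ w, g w.2 ∂π = ∫⁻ v, g v ∂q := by
  rw [← hπ.2.2, lintegral_map hg measurable_snd]

end IsCoupling

section ExpLoss

variable {Z : Type*} [MeasurableSpace Z] {L : ℝ → ℝ → ℝ}

lemma measurable_ofReal_loss (hLmeas : Measurable fun yy : ℝ × ℝ => L yy.1 yy.2)
    {h : Z → ℝ} (hh : Measurable h) :
    Measurable fun z : Z × ℝ => ENNReal.ofReal (L z.2 (h z.1)) :=
  (hLmeas.comp (measurable_snd.prodMk (hh.comp measurable_fst))).ennreal_ofReal

lemma expLoss_selfLabel (hLmeas : Measurable fun yy : ℝ × ℝ => L yy.1 yy.2)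
    (p : Measure (Z × ℝ)) {f h : Z → ℝ} (hf : Measurable f) (hh : Measurable h) :
    expLoss L (selfLabel p f) h = ∫⁻ z, ENNReal.ofReal (L (f z.1) (h z.1)) ∂p := by
  have hfh : Measurable fun x => ENNReal.ofReal (L (f x) (h x)) :=
    (hLmeas.comp (hf.prodMk hh)).ennreal_ofReal
  rw [expLoss, selfLabel, lintegral_map (measurable_ofReal_loss hLmeas hh)
    (measurable_id'.prodMk hf), lintegral_map hfh measurable_fst]

lemma expLoss_le_add_expLoss_selfLabel (hLmeas : Measurable fun yy : ℝ × ℝ => L yy.1 yy.2)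
    (hL0 : ∀ a b, 0 ≤ L a b) (hLsymm : ∀ a b, L a b = L b a)
    (hLtri : ∀ a b c, L a c ≤ L a b + L b c) (p : Measure (Z × ℝ))
    {f h : Z → ℝ} (hf : Measurable f) (hh : Measurable h) :
    expLoss L p f ≤ expLoss L p h + expLoss L (selfLabel p f) h := by
  rw [expLoss_selfLabel hLmeas p hf hh, expLoss, expLoss,
    ← lintegral_add_left (measurable_ofReal_loss hLmeas hh)]
  refine lintegral_mono fun z => ?_
  rw [← ENNReal.ofReal_add (hL0 _ _) (hL0 _ _), hLsymm (f z.1)]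
  exact ENNReal.ofReal_le_ofReal (hLtri _ _ _)

theorem expLoss_le_of_isCoupling (hLmeas : Measurable fun yy : ℝ × ℝ => L yy.1 yy.2)
    (hLsymm : ∀ a b, L a b = L b a)
    (hLtri : ∀ a b c, L a c ≤ L a b + L b c) {k : ℝ} (hk : 0 ≤ k)
    (hLlip : ∀ y a b, |L y a - L y b| ≤ k * |a - b|)
    {d : Z → Z → ℝ} (hd : ∀ x x', 0 ≤ d x x') {lam M : ℝ} (hlam : 0 ≤ lam)
    {g : Z → ℝ} (hg : Measurable g) (hgM : ∀ x x', |g x - g x'| ≤ M)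
    {π : Measure ((Z × ℝ) × (Z × ℝ))} {p q : Measure (Z × ℝ)} (hπ : IsCoupling π p q) :
    expLoss L q g ≤ ∫⁻ w, ENNReal.ofReal (k * lam * d w.1.1 w.2.1 + L w.1.2 w.2.2) ∂π
      + expLoss L p g
      + ENNReal.ofReal (k * M) * π {w | lam * d w.1.1 w.2.1 < |g w.1.1 - g w.2.1|} := by
  -- `bad` may be non-measurable; the indicator of its measurable hull is measurable, same mass.
  set bad := {w : (Z × ℝ) × (Z × ℝ) | lam * d w.1.1 w.2.1 < |g w.1.1 - g w.2.1|}
  set bad' := toMeasurable π bad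
  have hmeas := measurable_ofReal_loss hLmeas hg
  have hmeas_fst : Measurable fun w : (Z × ℝ) × (Z × ℝ) => ENNReal.ofReal (L w.1.2 (g w.1.1)) :=
    hmeas.comp measurable_fst
  have hpointwise : ∀ w : (Z × ℝ) × (Z × ℝ), ENNReal.ofReal (L w.2.2 (g w.2.1))
      ≤ ENNReal.ofReal (k * lam * d w.1.1 w.2.1 + L w.1.2 w.2.2)
        + ENNReal.ofReal (L w.1.2 (g w.1.1))
        + bad'.indicator (fun _ => ENNReal.ofReal (k * M)) w := by
    intro w
    have htransport := loss_le_add_add_lipschitz hLsymm hLtri hLlip w.1.2 w.2.2 (g w.1.1) (g w.2.1)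
    have hcost : 0 ≤ k * lam * d w.1.1 w.2.1 := mul_nonneg (mul_nonneg hk hlam) (hd _ _)
    by_cases hw : w ∈ bad
    · rw [Set.indicator_of_mem (subset_toMeasurable π bad hw)]
      have hbound := mul_le_mul_of_nonneg_left (hgM (w.1.1) (w.2.1)) hk
      have hreal : L w.2.2 (g w.2.1)
          ≤ k * lam * d w.1.1 w.2.1 + L w.1.2 w.2.2 + L w.1.2 (g w.1.1) + k * M := by linarith
      refine (ENNReal.ofReal_le_ofReal hreal).trans ?_
      exact ENNReal.ofReal_add_le.trans (add_le_add_left ENNReal.ofReal_add_le _)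
    · have hbound := mul_le_mul_of_nonneg_left (not_lt.mp hw) hk
      have hreal : L w.2.2 (g w.2.1)
          ≤ k * lam * d w.1.1 w.2.1 + L w.1.2 w.2.2 + L w.1.2 (g w.1.1) := by linarith
      refine (ENNReal.ofReal_le_ofReal hreal).trans ?_
      exact ENNReal.ofReal_add_le.trans le_self_add
  calc expLoss L q g = ∫⁻ w, ENNReal.ofReal (L w.2.2 (g w.2.1)) ∂π :=
        (hπ.lintegral_comp_snd hmeas).symm
    _ ≤ _ := lintegral_mono hpointwise
    _ = _ := by
      rw [lintegral_add_right _ (measurable_const.indicator (measurableSet_toMeasurable π bad)),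
        lintegral_add_right _ hmeas_fst, hπ.lintegral_comp_fst hmeas,
        lintegral_indicator_const (measurableSet_toMeasurable π bad), measure_toMeasurable]
      rfl

end ExpLoss

theorem stmt8_general {Z : Type*} [MeasurableSpace Z]
    (d : Z → Z → ℝ)
    (hdrefl : ∀ x, d x x = 0) (hdsymm : ∀ x x', d x x' = d x' x)
    (hdtri : ∀ x y z, d x z ≤ d x y + d y z)
    (k lam M φ : ℝ) (hk : 0 < k) (hlam : 0 < lam) (hM : 0 ≤ M)
    (L : ℝ → ℝ → ℝ) (hLmeas : Measurable fun yy : ℝ × ℝ => L yy.1 yy.2)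
    (hL0 : ∀ a b, 0 ≤ L a b)
    (hLsymm : ∀ a b, L a b = L b a)
    (hLtri : ∀ a b c, L a c ≤ L a b + L b c)
    (hLlip : ∀ y a b, |L y a - L y b| ≤ k * |a - b|)
    (pT : Measure (Z × ℝ))
    (pSα : Measure (Z × ℝ))
    (f : Z → ℝ) (hf : Measurable f)
    (H : Set (Z → ℝ)) (hHmeas : ∀ h ∈ H, Measurable h)
    (fstar : Z → ℝ) (hfstarH : fstar ∈ H)
    (hfstarM : ∀ x x', |fstar x - fstar x'| ≤ M)
    (πstar : Measure ((Z × ℝ) × (Z × ℝ)))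
    (hπstar : IsCoupling πstar pSα (selfLabel pT f))
    (hopt : ∫⁻ w, ENNReal.ofReal (k * lam * d w.1.1 w.2.1 + L w.1.2 w.2.2) ∂πstar
      = otCost (fun w w' : Z × ℝ => k * lam * d w.1 w'.1 + L w.2 w'.2) pSα (selfLabel pT f))
    (hptl : πstar {w : (Z × ℝ) × (Z × ℝ) |
        lam * d w.1.1 w.2.1 < |fstar w.1.1 - fstar w.2.1|} ≤ ENNReal.ofReal φ) :
    expLoss L pT f
      ≤ otCost (fun w w' : Z × ℝ => k * lam * d w.1 w'.1 + L w.2 w'.2)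
          pSα (selfLabel pT f)
        + (expLoss L pSα fstar + expLoss L pT fstar)
        + ENNReal.ofReal (k * M * φ) := by
  have hfstar := hHmeas fstar hfstarH
  have hd := nonneg_of_triangle hdrefl hdsymm hdtri
  calc expLoss L pT f ≤ expLoss L pT fstar + expLoss L (selfLabel pT f) fstar :=
        expLoss_le_add_expLoss_selfLabel hLmeas hL0 hLsymm hLtri pT hf hfstar
    _ ≤ expLoss L pT fstar + (otCost (fun w w' : Z × ℝ => k * lam * d w.1 w'.1 + L w.2 w'.2)
          pSα (selfLabel pT f) + expLoss L pSα fstar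
          + ENNReal.ofReal (k * M) * ENNReal.ofReal φ) := by
      rw [← hopt]
      gcongr expLoss L pT fstar + ?_
      refine (expLoss_le_of_isCoupling hLmeas hLsymm hLtri hk.le hLlip hd hlam.le hfstar
        hfstarM hπstar).trans ?_
      gcongr
    _ = _ := by
      rw [ENNReal.ofReal_mul (mul_nonneg hk.le hM)]
      ring

/-- Generalization bound for MSDA-WJDOT (Lemma 2):
`ε_{p_T}(f) ≤ W_D(p_S^α, p_T^f) + Λ(p_S^α, p_T) + k·M·φ`. -/
theorem stmt8 {Z : Type*} [MeasurableSpace Z] {J : ℕ}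
    (d : Z → Z → ℝ) (hdmeas : Measurable fun w : Z × Z => d w.1 w.2)
    (hdrefl : ∀ x, d x x = 0) (hdsymm : ∀ x x', d x x' = d x' x)
    (hdtri : ∀ x y z, d x z ≤ d x y + d y z)
    (k lam M φ : ℝ) (hk : 0 < k) (hlam : 0 < lam) (hM : 0 ≤ M)
    (hφ0 : 0 ≤ φ) (hφ1 : φ ≤ 1)
    (L : ℝ → ℝ → ℝ) (hLmeas : Measurable fun yy : ℝ × ℝ => L yy.1 yy.2)
    (hL0 : ∀ a b, 0 ≤ L a b)
    (hLsymm : ∀ a b, L a b = L b a)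
    (hLtri : ∀ a b c, L a c ≤ L a b + L b c)
    (hLlip : ∀ y a b, |L y a - L y b| ≤ k * |a - b|)
    (pS : Fin J → Measure (Z × ℝ)) [∀ j, IsProbabilityMeasure (pS j)]
    (pT : Measure (Z × ℝ)) [IsProbabilityMeasure pT]
    (α : Fin J → ℝ≥0∞) (hα1 : ∀ j, α j ≤ 1) (hαsum : ∑ j, α j = 1)
    (pSα : Measure (Z × ℝ)) [IsProbabilityMeasure pSα]
    (hpSα : pSα = ∑ j, α j • pS j)
    (f : Z → ℝ) (hf : Measurable f)
    (H : Set (Z → ℝ)) (hHmeas : ∀ h ∈ H, Measurable h)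
    (fstar : Z → ℝ) (hfstarH : fstar ∈ H)
    (hmin : ∀ h ∈ H,
      expLoss L pSα fstar + expLoss L pT fstar ≤ expLoss L pSα h + expLoss L pT h)
    (hfstarM : ∀ x x', |fstar x - fstar x'| ≤ M)
    (hfin1 : expLoss L pSα fstar ≠ ⊤) (hfin2 : expLoss L pT fstar ≠ ⊤)
    (hfin3 : expLoss L (selfLabel pT f) fstar ≠ ⊤) (hfin4 : expLoss L pT f ≠ ⊤)
    (πstar : Measure ((Z × ℝ) × (Z × ℝ)))
    (hπstar : IsCoupling πstar pSα (selfLabel pT f))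
    (hopt : ∫⁻ w, ENNReal.ofReal (k * lam * d w.1.1 w.2.1 + L w.1.2 w.2.2) ∂πstar
      = otCost (fun w w' : Z × ℝ => k * lam * d w.1 w'.1 + L w.2 w'.2) pSα (selfLabel pT f))
    (hptl : πstar {w : (Z × ℝ) × (Z × ℝ) |
        lam * d w.1.1 w.2.1 < |fstar w.1.1 - fstar w.2.1|} ≤ ENNReal.ofReal φ) :
    expLoss L pT f
      ≤ otCost (fun w w' : Z × ℝ => k * lam * d w.1 w'.1 + L w.2 w'.2)
          pSα (selfLabel pT f)
        + (expLoss L pSα fstar + expLoss L pT fstar)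
        + ENNReal.ofReal (k * M * φ) :=
  stmt8_general d hdrefl hdsymm hdtri k lam M φ hk hlam hM L hLmeas hL0 hLsymm hLtri hLlip pT pSα f
    hf H hHmeas fstar hfstarH hfstarM πstar hπstar hopt hptl
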